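/- arXiv:2008.06730 — 2 statements merged into one kernel-verified Lean document; each statement's English description precedes it below -/
import Mathlib

section
/- Discrete energy stability of the implicit source update: let ι be a finite index set of grid points, let M ∈ ℕ, and for each i ∈ ι let I_i^{old}, I_i^{new} ∈ ℝ^{M+1} (vectors of P_N expansion coefficients, with 0-th components (I_i^{old})₀, (I_i^{new})₀) and T_i^{old}, T_i^{new} ≥ 0 be real numbers. Let ε ≠ 0, c > 0, Δt > 0, σ > 0, a > 0, C_v > 0. Assume that for every i ∈ ι: (ε²/c)·(I_i^{new} − I_i^{old})/Δt = −σ·I_i^{new} + σ·a·c·(T_i^{new})⁴·e₀ (as an equation in ℝ^{M+1}, where e₀ is the first standard basis vector), and ε²·C_v·(T_i^{new} − T_i^{old})/Δt = −σ·( a·c·(T_i^{new})⁴ − (I_i^{new})₀ ). Then Σ_{i ∈ ι} [ (ε²/(2c))·(‖I_i^{new}‖² − ‖I_i^{old}‖²)/Δt + ε²·a·c·C_v·((T_i^{new})⁵ − (T_i^{old})⁵)/(5Δt) ] ≤ −σ·Σ_{i ∈ ι} ( (I_i^{new})₀ − a·c·(T_i^{new})⁴ )² ≤ 0, where ‖·‖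 is the Euclidean norm on ℝ^{M+1}. -/
open scoped BigOperators

set_option maxHeartbeats 800000 in
open scoped RealInnerProductSpace in
private lemma pointwise_energy
    (M : ℕ) (Io In : EuclideanSpace ℝ (Fin (M + 1))) (To Tn : ℝ)
    (hTo : 0 ≤ To) (hTn : 0 ≤ Tn)
    (ε c Δt σ a Cv : ℝ)
    (hε : ε ≠ 0) (hc : 0 < c) (hΔt : 0 < Δt) (hσ : 0 < σ) (ha : 0 < a) (hCv : 0 < Cv)
    (hI : (ε ^ 2 / c / Δt) • (In - Io) =
      (-σ) • In + (σ * a * c * Tn ^ 4) • (EuclideanSpace.single 0 1 : EuclideanSpace ℝ (Fin (M + 1))))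
    (hT : ε ^ 2 * Cv * (Tn - To) / Δt = -σ * (a * c * Tn ^ 4 - In 0)) :
    (ε ^ 2 / (2 * c)) * (‖In‖ ^ 2 - ‖Io‖ ^ 2) / Δt
      + ε ^ 2 * a * c * Cv * (Tn ^ 5 - To ^ 5) / (5 * Δt)
      ≤ -σ * (In 0 - a * c * Tn ^ 4) ^ 2 := by
  have hε2 : (0 : ℝ) < ε ^ 2 := by positivity
  -- scalar form of radiation equation: inner product with In
  have h1 : (ε ^ 2 / c / Δt) * ⟪In - Io, In⟫ =
      -σ * ‖In‖ ^ 2 + σ * a * c * Tn ^ 4 * In 0 := by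
    have h := congrArg (fun v : EuclideanSpace ℝ (Fin (M + 1)) => ⟪v, In⟫) hI
    simp only [real_inner_smul_left, inner_add_left,
      EuclideanSpace.inner_single_left, map_one, one_mul] at h
    rw [real_inner_self_eq_norm_sq] at h
    linarith [h]
  -- inner product lower bound
  have h2 : ‖In‖ ^ 2 - ‖Io‖ ^ 2 ≤ 2 * ⟪In - Io, In⟫ := by
    have hs : ⟪In - Io, In⟫ = ‖In‖ ^ 2 - ⟪Io, In⟫ := by
      rw [inner_sub_left, real_inner_self_eq_norm_sq]
    have hn : ‖In - Io‖ ^ 2 = ‖In‖ ^ 2 - 2 * ⟪In, Io⟫ + ‖Io‖ ^ 2 :=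
      norm_sub_sq_real In Io
    have hnn : (0:ℝ) ≤ ‖In - Io‖ ^ 2 := by positivity
    have hsym : ⟪Io, In⟫ = ⟪In, Io⟫ := real_inner_comm In Io
    nlinarith
  -- (In 0)^2 ≤ ‖In‖^2
  have h3 : (In 0) ^ 2 ≤ ‖In‖ ^ 2 := by
    have := abs_real_inner_le_norm (EuclideanSpace.single 0 (1:ℝ) :
      EuclideanSpace ℝ (Fin (M + 1))) In
    rw [EuclideanSpace.inner_single_left, EuclideanSpace.norm_single] at this
    simp only [map_one, one_mul, norm_one, one_mul] at this
    nlinarith [abs_nonneg (In 0), sq_abs (In 0)]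
  -- Tn^5 - To^5 ≤ 5 * Tn^4 * (Tn - To)
  have h4 : Tn ^ 5 - To ^ 5 ≤ 5 * Tn ^ 4 * (Tn - To) := by
    nlinarith [mul_nonneg (sq_nonneg (To - Tn))
      (by positivity : (0:ℝ) ≤ To ^ 3 + 2 * To ^ 2 * Tn + 3 * To * Tn ^ 2 + 4 * Tn ^ 3)]
  -- radiation part bound
  have hk : (0:ℝ) < ε ^ 2 / c / Δt := by positivity
  have hA : (ε ^ 2 / (2 * c)) * (‖In‖ ^ 2 - ‖Io‖ ^ 2) / Δt ≤
      -σ * ‖In‖ ^ 2 + σ * a * c * Tn ^ 4 * In 0 := by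
    rw [← h1]
    have : (ε ^ 2 / (2 * c)) * (‖In‖ ^ 2 - ‖Io‖ ^ 2) / Δt =
        (ε ^ 2 / c / Δt) * ((‖In‖ ^ 2 - ‖Io‖ ^ 2) / 2) := by
      ring
    rw [this]
    have := mul_le_mul_of_nonneg_left (by linarith : (‖In‖ ^ 2 - ‖Io‖ ^ 2) / 2 ≤ ⟪In - Io, In⟫) hk.le
    linarith
  -- material part bound
  have hB : ε ^ 2 * a * c * Cv * (Tn ^ 5 - To ^ 5) / (5 * Δt) ≤
      -σ * a * c * Tn ^ 4 * (a * c * Tn ^ 4 - In 0) := by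
    have hmul := congrArg (fun x => a * c * Tn ^ 4 * x) hT
    simp only at hmul
    have hlhs : ε ^ 2 * a * c * Cv * (Tn ^ 5 - To ^ 5) / (5 * Δt) ≤
        a * c * Tn ^ 4 * (ε ^ 2 * Cv * (Tn - To) / Δt) := by
      rw [div_le_iff₀ (by positivity)]
      have h5 : ε ^ 2 * a * c * Cv * (Tn ^ 5 - To ^ 5) ≤
          ε ^ 2 * a * c * Cv * (5 * Tn ^ 4 * (Tn - To)) :=
        mul_le_mul_of_nonneg_left h4 (by positivity)
      have : a * c * Tn ^ 4 * (ε ^ 2 * Cv * (Tn - To) / Δt) * (5 * Δt) =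
          ε ^ 2 * a * c * Cv * (5 * Tn ^ 4 * (Tn - To)) := by
        field_simp
      linarith
    rw [hmul] at hlhs
    linarith [hlhs]
  -- combine
  nlinarith [mul_le_mul_of_nonneg_left h3 hσ.le, hA, hB]

/-- Discrete energy stability of the implicit source update of the first-order
AP IMEX scheme for the 1D gray radiative transfer `P_N` system: the total discrete
energy (radiation `ℓ²` norm plus `a·c·C_v·T⁵/5`) does not increase. -/
theorem discrete_energy_stability
    (ι : Type*) [Fintype ι] (M : ℕ)
    (Iold Inew : ι → EuclideanSpace ℝ (Fin (M + 1)))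
    (Told Tnew : ι → ℝ)
    (hTold : ∀ i, 0 ≤ Told i) (hTnew : ∀ i, 0 ≤ Tnew i)
    (ε c Δt σ a Cv : ℝ)
    (hε : ε ≠ 0) (hc : 0 < c) (hΔt : 0 < Δt) (hσ : 0 < σ) (ha : 0 < a) (hCv : 0 < Cv)
    -- implicit radiation update, as a vector equation in ℝ^{M+1}
    (hI : ∀ i, (ε ^ 2 / c / Δt) • (Inew i - Iold i) =
      (-σ) • Inew i + (σ * a * c * (Tnew i) ^ 4) • (EuclideanSpace.single 0 1 : EuclideanSpace ℝ (Fin (M + 1))))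
    -- implicit material energy update
    (hT : ∀ i, ε ^ 2 * Cv * (Tnew i - Told i) / Δt =
      -σ * (a * c * (Tnew i) ^ 4 - Inew i 0)) :
    (∑ i, ((ε ^ 2 / (2 * c)) * (‖Inew i‖ ^ 2 - ‖Iold i‖ ^ 2) / Δt
        + ε ^ 2 * a * c * Cv * ((Tnew i) ^ 5 - (Told i) ^ 5) / (5 * Δt)) ≤
      -σ * ∑ i, (Inew i 0 - a * c * (Tnew i) ^ 4) ^ 2)
    ∧ -σ * (∑ i, (Inew i 0 - a * c * (Tnew i) ^ 4) ^ 2) ≤ 0 := by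
  constructor
  · rw [Finset.mul_sum]
    apply Finset.sum_le_sum
    intro i _
    exact pointwise_energy M (Iold i) (Inew i) (Told i) (Tnew i)
      (hTold i) (hTnew i) ε c Δt σ a Cv hε hc hΔt hσ ha hCv (hI i) (hT i)
  · have : (0:ℝ) ≤ ∑ i, (Inew i 0 - a * c * (Tnew i) ^ 4) ^ 2 :=
      Finset.sum_nonneg fun i _ => sq_nonneg _
    nlinarith
end

section
/- Five-point reduction of the asymptotic flux (x-direction): let u : ℤ → ℝ and s : ℤ → ℝ with s(i) > 0 for all i, let Δx > 0 and ε ≠ 0. Define, for each i ∈ ℤ, G(i) = −(ε/s(i))·√(2/3)·(u(i+1) − u(i−1))/(2Δx), and define the interface flux F(i+1/2) = (1/4)·√(2/3)·( 2·G(i) + 2·G(i+1) ). Then for every i ∈ ℤ, (1/ε)·( F(i+1/2) − F(i−1/2) )/Δx = −(1/3)·( (u(i+2) − u(i))/(2Δx·s(i+1)) − (u(i) − u(i−2))/(2Δx·s(i−1)) )/Δx, i.e. the flux divergence divided by ε equals a five-point central-difference approximation of −∂/∂x( (1/(3s))·∂u/∂x ). -/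
/-!
The interface flux averages neighbouring values of `G`, so its difference telescopes to
`F(i+1/2) - F(i-1/2) = (1/2)·√(2/3)·(G(i+1) - G(i-1))`. Each `G(i±1)` is a central difference of
`u` over `u(i±2), u(i)` weighted by `-ε/s(i±1)`, so the difference carries the factor `ε·√(2/3)`;
dividing by `ε` and using `√(2/3)² = 2/3` leaves the coefficient `-(1/2)·(2/3) = -1/3`.
-/

theorem sub_pred_of_eq_mul_add_succ {R : Type*} [CommRing R] {G F : ℤ → R} (c : R)
    (hF : ∀ i, F i = c * (2 * G i + 2 * G (i + 1))) (i : ℤ) :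
    F i - F (i - 1) = 2 * c * (G (i + 1) - G (i - 1)) := by
  rw [hF, hF, sub_add_cancel]
  ring

theorem five_point_asymptotic_flux_reduction_general
    (u s : ℤ → ℝ)
    (Δx ε : ℝ) (hε : ε ≠ 0)
    (G F : ℤ → ℝ)
    -- leading-order first moment: central-difference discretization of
    -- `−(ε/s)·√(2/3)·∂u/∂x`
    (hG : ∀ i, G i = -(ε / s i) * Real.sqrt (2 / 3) * (u (i + 1) - u (i - 1)) / (2 * Δx))
    -- interface flux `F(i+1/2)`, indexed by `i`
    (hF : ∀ i, F i = (1 / 4) * Real.sqrt (2 / 3) * (2 * G i + 2 * G (i + 1))) :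
    ∀ i, (1 / ε) * ((F i - F (i - 1)) / Δx) =
      -(1 / 3) * ((u (i + 2) - u i) / (2 * Δx * s (i + 1))
        - (u i - u (i - 2)) / (2 * Δx * s (i - 1))) / Δx := by
  intro i
  have hG_succ := hG (i + 1)
  have hG_pred := hG (i - 1)
  rw [add_assoc, one_add_one_eq_two, add_sub_cancel_right] at hG_succ
  rw [sub_add_cancel, sub_sub, one_add_one_eq_two] at hG_pred
  set a := Real.sqrt (2 / 3)
  set W := (u (i + 2) - u i) / (2 * Δx * s (i + 1)) - (u i - u (i - 2)) / (2 * Δx * s (i - 1))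
  have hG_diff : G (i + 1) - G (i - 1) = -(ε * a) * W := by
    rw [hG_succ, hG_pred]
    ring
  have ha : a * a = 2 / 3 := Real.mul_self_sqrt (by norm_num)
  calc (1 / ε) * ((F i - F (i - 1)) / Δx)
      = (1 / ε) * (2 * (1 / 4 * a) * (-(ε * a) * W) / Δx) := by
        rw [sub_pred_of_eq_mul_add_succ _ hF, hG_diff]
    _ = -(1 / 2) * (ε / ε) * (a * a) * W / Δx := by ring
    _ = -(1 / 3) * W / Δx := by
        rw [div_self hε, ha]
        ring

/-- Five-point reduction of the asymptotic flux in the x-direction: the flux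
divergence divided by `ε` equals a five-point central-difference approximation
of `−∂/∂x((1/(3s))·∂u/∂x)`. -/
theorem five_point_asymptotic_flux_reduction
    (u s : ℤ → ℝ) (hs : ∀ i, 0 < s i)
    (Δx ε : ℝ) (hΔx : 0 < Δx) (hε : ε ≠ 0)
    (G F : ℤ → ℝ)
    -- leading-order first moment: central-difference discretization of
    -- `−(ε/s)·√(2/3)·∂u/∂x`
    (hG : ∀ i, G i = -(ε / s i) * Real.sqrt (2 / 3) * (u (i + 1) - u (i - 1)) / (2 * Δx))
    -- interface flux `F(i+1/2)`, indexed by `i`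
    (hF : ∀ i, F i = (1 / 4) * Real.sqrt (2 / 3) * (2 * G i + 2 * G (i + 1))) :
    ∀ i, (1 / ε) * ((F i - F (i - 1)) / Δx) =
      -(1 / 3) * ((u (i + 2) - u i) / (2 * Δx * s (i + 1))
        - (u i - u (i - 2)) / (2 * Δx * s (i - 1))) / Δx :=
  five_point_asymptotic_flux_reduction_general u s Δx ε hε G F hG hF
end
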